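/- Let G be a finite simple graph and A ⊆ V(G) with cut-rank r = ρ_G(A) ≥ 1. Then U_G(A) ≤ r · 2^{(r² + 5r)/4} (as an inequality of real numbers); equivalently β_G(A) ≤ ρ_G(A)²/4 + 5ρ_G(A)/4 + log₂ ρ_G(A). Together with ρ_G(A) ≤ U_G(A) this is the per-cut form of the inequality log rw(G) ≤ βw(G) ≤ rw(G)²/4 + 5rw(G)/4 + log rw(G). -/

import Mathlib

/-!
For `Y ⊆ A`, the set `N(Y) \ A` is the support of the span of the rows of the cut matrix indexed
by `Y`, so `U_G(A)` is at most the number of subspaces of the row space, a GF(2)-space of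
dimension `r = ρ_G(A)`. A subspace of `K^n` is the graph of a linear map from the coordinates in
some `P` to those in `Pᶜ`, and `|Pᶜ| |P| ≤ n² / 4`; hence `K^n` has at most `2^n |K|^(n²/4)`
subspaces. For `K = GF(2)` this gives `U_G(A) ≤ 2^(r + r²/4) ≤ r 2^((r² + 5r)/4)`.
-/

open Classical in
/-- The cut matrix of `A`: rows indexed by `A`, columns by its complement, over GF(2),
with `(x,y)` entry `1` iff `x` and `y` are adjacent. -/
noncomputable def cutMatrix {V : Type*} [Fintype V] [DecidableEq V]
    (G : SimpleGraph V) (A : Finset V) : Matrix ↥A ↥(Aᶜ) (ZMod 2) :=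
  Matrix.of fun x y => if G.Adj x.1 y.1 then 1 else 0

/-- The cut-rank `ρ_G(A)`: the GF(2)-rank of the cut matrix of `A`. -/
noncomputable def cutRank {V : Type*} [Fintype V] [DecidableEq V]
    (G : SimpleGraph V) (A : Finset V) : ℕ :=
  (cutMatrix G A).rank

/-- The union-count `U_G(A)`: the number of distinct sets `N(Y) \ A` over `Y ⊆ A`. -/
noncomputable def unionCount {V : Type*} [Fintype V] [DecidableEq V]
    (G : SimpleGraph V) (A : Finset V) : ℕ :=
  Set.ncard {S : Set V | ∃ Y : Set V, Y ⊆ ↑A ∧ (⋃ y ∈ Y, G.neighborSet y) \ ↑A = S}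

/-- `nss_G(A)`: the number of distinct GF(2)-linear spans of subsets of rows of the
cut matrix of `A`. -/
noncomputable def nss {V : Type*} [Fintype V] [DecidableEq V]
    (G : SimpleGraph V) (A : Finset V) : ℕ :=
  Set.ncard {W : Submodule (ZMod 2) (↥(Aᶜ) → ZMod 2) |
    ∃ S : Set ↥A, W = Submodule.span (ZMod 2) ((fun x => cutMatrix G A x) '' S)}

open Submodule Module

section CoordinateRestriction

variable {K : Type*} [Field K] {ι : Type*} [Fintype ι]

def coordRestrict (P : Finset ι) : (ι → K) →ₗ[K] (P → K) :=
  LinearMap.funLeft K K Subtype.val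

lemma eq_of_coordRestrict_eq [DecidableEq ι] (P : Finset ι) {v w : ι → K}
    (h : coordRestrict P v = coordRestrict P w) (hc : coordRestrict Pᶜ v = coordRestrict Pᶜ w) :
    v = w := by
  funext j
  by_cases hj : j ∈ P
  · exact congrFun h ⟨j, hj⟩
  · exact congrFun hc ⟨j, Finset.mem_compl.mpr hj⟩

/-- The coordinate functionals on `W` span its dual, so some of them form a basis of the dual. -/
lemma exists_coordRestrict_bijective (W : Submodule K (ι → K)) :
    ∃ P : Finset ι, Function.Bijective (coordRestrict P ∘ₗ W.subtype) := by
  classical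
  let ε : ι → Dual K W := fun j => LinearMap.proj j ∘ₗ W.subtype
  obtain ⟨b, -, -, hspan, hli⟩ :=
    exists_linearIndepOn_extension (linearIndepOn_empty K ε) (Set.subset_univ ∅)
  refine ⟨b.toFinset, ?_⟩
  have hinj : Function.Injective (coordRestrict b.toFinset ∘ₗ W.subtype) := by
    rw [← LinearMap.ker_eq_bot, eq_bot_iff]
    intro w hw
    have hb : ε '' b ⊆ LinearMap.ker (LinearMap.applyₗ w : Dual K W →ₗ[K] K) := by
      rintro _ ⟨j, hj, rfl⟩
      exact congrFun hw ⟨j, Set.mem_toFinset.mpr hj⟩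
    have hall : ∀ j, (w : ι → K) j = 0 := fun j =>
      span_le.mpr hb (hspan ⟨j, trivial, rfl⟩)
    exact (mem_bot K).mpr (Subtype.ext (funext hall))
  have hcard : finrank K (b.toFinset → K) ≤ finrank K W := by
    simpa using hli.linearIndependent.fintype_card_le_finrank
  exact ⟨hinj, (LinearMap.injective_iff_surjective_of_finrank_eq_finrank
    ((LinearMap.finrank_le_finrank_of_injective hinj).antisymm hcard)).mp hinj⟩

lemma exists_eq_ker_coordRestrict_sub [DecidableEq ι] (W : Submodule K (ι → K)) :
    ∃ (P : Finset ι) (φ : (P → K) →ₗ[K] (↥Pᶜ → K)),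
      W = LinearMap.ker (coordRestrict Pᶜ - φ ∘ₗ coordRestrict P) := by
  obtain ⟨P, hP⟩ := exists_coordRestrict_bijective W
  let e := LinearEquiv.ofBijective _ hP
  refine ⟨P, coordRestrict Pᶜ ∘ₗ W.subtype ∘ₗ e.symm.toLinearMap, le_antisymm ?_ ?_⟩
  · intro w hw
    have : e.symm (coordRestrict P w) = ⟨w, hw⟩ := e.symm_apply_apply ⟨w, hw⟩
    simp [this]
  · intro v hv
    rw [LinearMap.mem_ker, LinearMap.sub_apply, sub_eq_zero] at hv
    obtain ⟨w, hw⟩ := e.surjective (coordRestrict P v)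
    have hwv : (w : ι → K) = v := eq_of_coordRestrict_eq P hw (by
      rw [hv]; simp [← hw])
    exact hwv ▸ w.2

lemma mul_le_add_sq_div_four (a b : ℕ) : a * b ≤ (a + b) ^ 2 / 4 :=
  (Nat.le_div_iff_mul_le (by norm_num)).mpr (by nlinarith [sq_nonneg ((a : ℤ) - b)])

lemma card_submodule_pi_le [Fintype K] :
    Nat.card (Submodule K (ι → K)) ≤
      2 ^ Fintype.card ι * Fintype.card K ^ (Fintype.card ι ^ 2 / 4) := by
  classical
  let graph : (Σ P : Finset ι, Matrix ↥(Pᶜ) ↥P K) → Submodule K (ι → K) :=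
    fun x => LinearMap.ker (coordRestrict x.1ᶜ - Matrix.toLin' x.2 ∘ₗ coordRestrict x.1)
  have hgraph : Function.Surjective graph := by
    intro W
    obtain ⟨P, φ, hW⟩ := exists_eq_ker_coordRestrict_sub W
    exact ⟨⟨P, LinearMap.toMatrix' φ⟩, by simp [graph, hW]⟩
  have hmatrix (P : Finset ι) :
      Fintype.card (Matrix ↥(Pᶜ) ↥P K) ≤ Fintype.card K ^ (Fintype.card ι ^ 2 / 4) := by
    rw [show Fintype.card (Matrix ↥(Pᶜ) ↥P K) = Fintype.card K ^ (Pᶜ.card * P.card) by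
        rw [pow_mul', ← Fintype.card_coe Pᶜ, ← Fintype.card_coe P, ← Fintype.card_fun,
          ← Fintype.card_fun]; rfl, ← Finset.card_compl_add_card P]
    exact Nat.pow_le_pow_right Fintype.card_pos (mul_le_add_sq_div_four _ _)
  calc Nat.card (Submodule K (ι → K))
      ≤ Nat.card (Σ P : Finset ι, Matrix ↥(Pᶜ) ↥P K) := Nat.card_le_card_of_surjective graph hgraph
    _ = ∑ P : Finset ι, Fintype.card (Matrix ↥(Pᶜ) ↥P K) := by
      rw [Nat.card_eq_fintype_card, Fintype.card_sigma]
    _ ≤ ∑ _P : Finset ι, Fintype.card K ^ (Fintype.card ι ^ 2 / 4) :=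
      Finset.sum_le_sum fun P _ => hmatrix P
    _ = 2 ^ Fintype.card ι * Fintype.card K ^ (Fintype.card ι ^ 2 / 4) := by
      simp [Finset.card_univ, Fintype.card_finset]

end CoordinateRestriction

lemma card_submodule_le {K V : Type*} [Field K] [Fintype K] [AddCommGroup V] [Module K V]
    [FiniteDimensional K V] :
    Nat.card (Submodule K V) ≤ 2 ^ finrank K V * Fintype.card K ^ (finrank K V ^ 2 / 4) := by
  rw [Nat.card_congr (Submodule.orderIsoMapComap (Module.finBasis K V).equivFun).toEquiv]
  simpa using card_submodule_pi_le (K := K) (ι := Fin (finrank K V))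

lemma exists_mem_span_apply_ne_zero_iff {R β : Type*} [Semiring R] {s : Set (β → R)} (j : β) :
    (∃ w ∈ span R s, w j ≠ 0) ↔ ∃ v ∈ s, v j ≠ 0 := by
  refine ⟨fun ⟨w, hw, hwj⟩ => ?_, fun ⟨v, hv, hvj⟩ => ⟨v, subset_span hv, hvj⟩⟩
  by_contra! h
  have : span R s ≤ LinearMap.ker (LinearMap.proj j : (β → R) →ₗ[R] R) := span_le.mpr h
  exact hwj (this hw)

section CutMatrix

variable {V : Type*} [Fintype V] [DecidableEq V]

lemma cutMatrix_ne_zero_iff (G : SimpleGraph V) (A : Finset V) (x : A) (y : ↥(Aᶜ)) :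
    cutMatrix G A x y ≠ 0 ↔ G.Adj x y := by
  simp [cutMatrix]

lemma neighborSet_diff_eq_support_span (G : SimpleGraph V) (A : Finset V) {Y : Set V}
    (hY : Y ⊆ A) :
    (⋃ y ∈ Y, G.neighborSet y) \ A =
      {z | ∃ hz : z ∈ Aᶜ, ∃ w ∈ span (ZMod 2) ((fun x => cutMatrix G A x) '' {x | ↑x ∈ Y}),
        w ⟨z, hz⟩ ≠ 0} := by
  ext z
  simp only [Set.mem_sdiff, Set.mem_iUnion, SimpleGraph.mem_neighborSet, Finset.mem_coe,
    Set.mem_ofPred_eq]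
  constructor
  · rintro ⟨⟨y, hy, hyz⟩, hz⟩
    refine ⟨Finset.mem_compl.mpr hz, (exists_mem_span_apply_ne_zero_iff _).mpr
      ⟨_, ⟨⟨y, hY hy⟩, hy, rfl⟩, (cutMatrix_ne_zero_iff G A _ _).mpr hyz⟩⟩
  · rintro ⟨hz, hw⟩
    obtain ⟨_, ⟨x, hx, rfl⟩, hxz⟩ := (exists_mem_span_apply_ne_zero_iff _).mp hw
    exact ⟨⟨x, hx, (cutMatrix_ne_zero_iff G A _ _).mp hxz⟩, Finset.mem_compl.mp hz⟩

lemma unionCount_le_nss (G : SimpleGraph V) (A : Finset V) : unionCount G A ≤ nss G A := by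
  let support (W : Submodule (ZMod 2) (↥(Aᶜ) → ZMod 2)) : Set V :=
    {z | ∃ hz : z ∈ Aᶜ, ∃ w ∈ W, w ⟨z, hz⟩ ≠ 0}
  have hsub : {S : Set V | ∃ Y : Set V, Y ⊆ ↑A ∧ (⋃ y ∈ Y, G.neighborSet y) \ ↑A = S} ⊆
      support '' {W | ∃ S : Set A, W = span (ZMod 2) ((fun x => cutMatrix G A x) '' S)} := by
    rintro _ ⟨Y, hY, rfl⟩
    exact ⟨_, ⟨_, rfl⟩, (neighborSet_diff_eq_support_span G A hY).symm⟩
  exact (Set.ncard_le_ncard hsub (Set.toFinite _)).trans (Set.ncard_image_le (Set.toFinite _))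

lemma nss_le_card_submodule (G : SimpleGraph V) (A : Finset V) :
    nss G A ≤ Nat.card (Submodule (ZMod 2) (span (ZMod 2) (Set.range (cutMatrix G A).row))) := by
  set R := span (ZMod 2) (Set.range (cutMatrix G A).row)
  rw [Nat.card_congr (Submodule.MapSubtype.orderIso R).toEquiv]
  refine (Set.ncard_le_ncard ?_ (Set.toFinite _)).trans_eq (Nat.card_coe_set_eq {W | W ≤ R}).symm
  rintro _ ⟨S, rfl⟩
  exact span_mono (Set.image_subset_range _ _)

end CutMatrix

/-- if `r = ρ_G(A) ≥ 1` then `U_G(A) ≤ r · 2^((r² + 5r)/4)`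
as an inequality of real numbers (equivalently
`β_G(A) ≤ ρ_G(A)²/4 + 5ρ_G(A)/4 + log₂ ρ_G(A)`). -/
theorem unionCount_le_of_cutRank {V : Type*} [Fintype V] [DecidableEq V]
    (G : SimpleGraph V) (A : Finset V) (r : ℕ) (hr : r = cutRank G A) (hr1 : 1 ≤ r) :
    (unionCount G A : ℝ) ≤ (r : ℝ) * (2 : ℝ) ^ ((((r : ℝ)) ^ 2 + 5 * (r : ℝ)) / 4) := by
  have hcount : unionCount G A ≤ 2 ^ r * 2 ^ (r ^ 2 / 4) := by
    have hrank : finrank (ZMod 2) (span (ZMod 2) (Set.range (cutMatrix G A).row)) = r := by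
      rw [hr, cutRank, Matrix.rank_eq_finrank_span_row]
    calc unionCount G A ≤ nss G A := unionCount_le_nss G A
      _ ≤ _ := nss_le_card_submodule G A
      _ ≤ _ := card_submodule_le
      _ = 2 ^ r * 2 ^ (r ^ 2 / 4) := by rw [hrank, ZMod.card]
  have hexp : ((r + r ^ 2 / 4 : ℕ) : ℝ) ≤ ((r : ℝ) ^ 2 + 5 * r) / 4 := by
    have : ((r ^ 2 / 4 : ℕ) : ℝ) ≤ (r : ℝ) ^ 2 / 4 := by exact_mod_cast Nat.cast_div_le
    push_cast
    linarith [(Nat.cast_nonneg r : (0 : ℝ) ≤ r)]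
  calc (unionCount G A : ℝ) ≤ (2 : ℝ) ^ ((r + r ^ 2 / 4 : ℕ) : ℝ) := by
        rw [Real.rpow_natCast, pow_add]; exact_mod_cast hcount
    _ ≤ (2 : ℝ) ^ (((r : ℝ) ^ 2 + 5 * r) / 4) :=
        Real.rpow_le_rpow_of_exponent_le (by norm_num) hexp
    _ ≤ r * (2 : ℝ) ^ (((r : ℝ) ^ 2 + 5 * r) / 4) :=
        le_mul_of_one_le_left (by positivity) (by exact_mod_cast hr1)
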